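/- In the basic normal modal logic K extended with the n-density axiom □ⁿp → □p, if for sets of formulas u₀,…,uₙ one can derive, for each i with 1 ≤ i ≤ n, that the conjunction of u_{i-1} proves □(¬(conjunction of uₙ)) implies u_{i-2} proves □²(¬ conj uₙ), then chaining gives u₀ ⊢ □ⁿ(¬ conj uₙ), and hence by the n-density axiom u₀ ⊢ □(¬ conj uₙ). -/
import Mathlib


inductive Formula where
  | atom : ℕ → Formula
  | bot : Formula
  | neg : Formula → Formula
  | and : Formula → Formula → Formula
  | box : Formula → Formula
deriving DecidableEq

/-- Material implication `φ → ψ` as the abbreviation `¬(φ ∧ ¬ψ)`. -/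
def Formula.impl (φ ψ : Formula) : Formula := .neg (.and φ (.neg ψ))

/-- `□ⁿφ`. -/
def boxIter : ℕ → Formula → Formula
  | 0, φ => φ
  | n + 1, φ => .box (boxIter n φ)

/-- Classical (boolean) evaluation, where boxed formulas are treated as
propositional variables. -/
def evalC (v : Formula → Bool) : Formula → Bool
  | .atom a => v (.atom a)
  | .bot => false
  | .neg φ => !evalC v φ
  | .and φ ψ => evalC v φ && evalC v ψ
  | .box φ => v (.box φ)

/-- Hilbert system for `K` plus the `n`-density axiom `□ⁿφ → □φ`:
propositional tautologies, modus ponens, necessitation, axiom K, `n`-density. -/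
inductive Prov (n : ℕ) : Formula → Prop
  | taut : ∀ φ, (∀ v : Formula → Bool, evalC v φ = true) → Prov n φ
  | mp : ∀ φ ψ, Prov n (φ.impl ψ) → Prov n φ → Prov n ψ
  | nec : ∀ φ, Prov n φ → Prov n (.box φ)
  | axK : ∀ φ ψ, Prov n ((Formula.box (φ.impl ψ)).impl ((Formula.box φ).impl (.box ψ)))
  | dense : ∀ φ, Prov n ((boxIter n φ).impl (.box φ))

/-- Conjunction of a finite set (list) of formulas. -/
def conjList : List Formula → Formula :=
  fun l => l.foldr Formula.and (.neg .bot)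

/-- `s ⊢ φ`: the conjunction of `s` proves `φ`. -/
def SeqProv (n : ℕ) (s : List Formula) (φ : Formula) : Prop :=
  Prov n ((conjList s).impl φ)

/-- in K + `n`-density, from the base `u_{n-1} ⊢ □¬(⋀uₙ)` and the
chaining steps (each lowering the index while raising the number of boxes),
one gets `u₀ ⊢ □ⁿ¬(⋀uₙ)`, and hence by the `n`-density axiom `u₀ ⊢ □¬(⋀uₙ)`. -/
theorem chain_density (n : ℕ) (hn : 1 ≤ n) (u : ℕ → List Formula)
    (hbase : SeqProv n (u (n - 1)) (.box (.neg (conjList (u n)))))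
    (hstep : ∀ i, 1 ≤ i → i ≤ n - 1 →
      SeqProv n (u i) (boxIter (n - i) (.neg (conjList (u n)))) →
      SeqProv n (u (i - 1)) (boxIter (n - i + 1) (.neg (conjList (u n))))) :
    SeqProv n (u 0) (boxIter n (.neg (conjList (u n)))) ∧
      SeqProv n (u 0) (.box (.neg (conjList (u n)))) := by
  set φ := Formula.neg (conjList (u n)) with hφ
  have key : ∀ k, k ≤ n - 1 → SeqProv n (u (n - 1 - k)) (boxIter (k + 1) φ) := by
    intro k
    induction k with
    | zero =>
      intro _
      simpa [boxIter] using hbase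
    | succ k ih =>
      intro hk
      have h1 : 1 ≤ n - 1 - k := by omega
      have h2 : n - 1 - k ≤ n - 1 := by omega
      have e1 : n - (n - 1 - k) = k + 1 := by omega
      have e2 : n - 1 - k - 1 = n - 1 - (k + 1) := by omega
      have := hstep (n - 1 - k) h1 h2 (by rw [e1]; exact ih (by omega))
      rw [e1, e2] at this
      exact this
  have h0 : SeqProv n (u 0) (boxIter n φ) := by
    have := key (n - 1) le_rfl
    have e : n - 1 - (n - 1) = 0 := by omega
    have e' : n - 1 + 1 = n := by omega
    rwa [e, e'] at this
  refine ⟨h0, ?_⟩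
  have hd : Prov n ((boxIter n φ).impl (.box φ)) := Prov.dense φ
  have syll : Prov n (((boxIter n φ).impl (.box φ)).impl
      (((conjList (u 0)).impl (boxIter n φ)).impl ((conjList (u 0)).impl (.box φ)))) := by
    apply Prov.taut
    intro v
    simp only [Formula.impl, evalC]
    cases evalC v (conjList (u 0)) <;> cases evalC v (boxIter n φ) <;>
      cases v (Formula.box φ) <;> rfl
  exact Prov.mp _ _ (Prov.mp _ _ syll hd) h0
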